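/- Let n ≥ 5 and let G be a connected simple graph on n vertices such that the multiplicity of the largest distance Laplacian eigenvalue of G equals n−3. Then G contains no induced subgraph isomorphic to the path P_5 on 5 vertices. -/

import Mathlib

open Matrix

/-- The distance Laplacian matrix of a graph: diagonal entries are the transmissions
`Tr(v) = ∑ u, d(v,u)`, off-diagonal entries are `-d(u,v)`. -/
noncomputable def distLaplacian {V : Type*} [Fintype V] [DecidableEq V]
    (G : SimpleGraph V) : Matrix V V ℝ :=
  Matrix.of fun i j => if i = j then ∑ k : V, (G.dist i k : ℝ) else -(G.dist i j : ℝ)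

/-- The multiplicity of `μ` as an eigenvalue of `M`, i.e. the dimension of the
corresponding eigenspace. -/
noncomputable def eigMult {V : Type*} [Fintype V] (M : Matrix V V ℝ) (μ : ℝ) : ℕ :=
  Module.finrank ℝ (Module.End.eigenspace M.mulVecLin μ)

/-- The largest eigenvalue of a matrix. -/
noncomputable def lambdaMax {V : Type*} [Fintype V] (M : Matrix V V ℝ) : ℝ :=
  sSup {μ : ℝ | Module.End.HasEigenvalue M.mulVecLin μ}

/-- The transmission of a vertex. -/
noncomputable def transmission {V : Type*} [Fintype V] (G : SimpleGraph V) (v : V) : ℕ :=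
  ∑ u : V, G.dist v u

/-!
Let `λ` be the largest eigenvalue of `D = D^L(G)` and `v₀ ⋯ v₄` an induced `P₅`. Then `λ I - D` is
positive semidefinite, its kernel (the `λ`-eigenspace) has dimension `n - 3`, and its kernel
vectors sum to zero because the columns of `D` do and `λ > 0`. A subspace of dimension `n - 3`
meets every 4-dimensional coordinate subspace, giving kernel vectors `y` supported on
`{v₀, v₁, v₃, v₄}` and `z` supported on `{v₀, v₁, v₂, v₃}`. Only the rows of `λ I - D` at the path
vertices are used, and there all distances but `d(v₀, v₃)`, `d(v₁, v₄)`, `d(v₀, v₄)` are known.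
The row at `v₂` forces `y = (s, w, 0, -w, -s)`. The vector `z` makes a `2 × 2` determinant vanish,
and rewriting it through the rows of `y` gives `s w < 0`. Then the `{v₀, v₃}` principal minor of
`λ I - D` turns the rows of `y` at `v₀` and `v₃` into a positive definite quadratic form in
`(s, w)` that would have to be `≤ 0`.
-/

section Spectral

variable {ι : Type*} [Fintype ι] [DecidableEq ι]

lemma setOf_hasEigenvalue_mulVecLin_eq_spectrum (A : Matrix ι ι ℝ) :
    {μ | Module.End.HasEigenvalue A.mulVecLin μ} = spectrum ℝ A := by
  ext μ
  rw [Set.mem_ofPred_eq, Module.End.hasEigenvalue_iff_mem_spectrum, ← Matrix.toLin'_apply',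
    Matrix.spectrum_toLin']

lemma le_lambdaMax_of_mem_spectrum {A : Matrix ι ι ℝ} {μ : ℝ} (hμ : μ ∈ spectrum ℝ A) :
    μ ≤ lambdaMax A := by
  rw [lambdaMax, setOf_hasEigenvalue_mulVecLin_eq_spectrum]
  exact le_csSup A.finite_real_spectrum.bddAbove hμ

lemma Matrix.IsHermitian.posSemidef_lambdaMax_smul_one_sub {A : Matrix ι ι ℝ}
    (hA : A.IsHermitian) : (lambdaMax A • 1 - A).PosSemidef := by
  rw [← Algebra.algebraMap_eq_smul_one, posSemidef_iff_isHermitian_and_spectrum_nonneg,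
    ← spectrum.singleton_sub_eq, algebraMap_eq_diagonal]
  refine ⟨(isHermitian_diagonal _).sub hA, ?_⟩
  rintro _ ⟨_, rfl, μ, hμ, rfl⟩
  exact sub_nonneg.mpr (le_lambdaMax_of_mem_spectrum hμ)

end Spectral

lemma Matrix.PosSemidef.apply_mul_apply_le {ι : Type*} [Fintype ι] {A : Matrix ι ι ℝ}
    (hA : A.PosSemidef) (i j : ι) : A i j * A j i ≤ A i i * A j j := by
  have h := (hA.submatrix ![i, j]).det_nonneg
  rw [det_fin_two] at h
  simpa [sub_nonneg] using h


lemma Submodule.exists_ne_zero_forall_notMem_eq_zero {K ι : Type*} [Field K] [Fintype ι]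
    (E : Submodule K (ι → K)) (s : Finset ι)
    (h : Fintype.card ι < Module.finrank K E + s.card) :
    ∃ x ∈ E, x ≠ 0 ∧ ∀ i ∉ s, x i = 0 := by
  classical
  let restrict : E →ₗ[K] ({i // i ∉ s} → K) :=
    LinearMap.funLeft K K Subtype.val ∘ₗ E.subtype
  have hker : LinearMap.ker restrict ≠ ⊥ := by
    apply LinearMap.ker_ne_bot_of_finrank_lt
    rw [Module.finrank_fintype_fun_eq_card, Fintype.card_subtype_compl, Fintype.card_coe]
    have := s.card_le_univ
    omega
  obtain ⟨⟨x, hxE⟩, hx, hx0⟩ := Submodule.exists_mem_ne_zero_of_ne_bot hker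
  refine ⟨x, hxE, fun h => hx0 (by simp [h]), fun i hi => ?_⟩
  exact congrFun (LinearMap.mem_ker.mp hx) ⟨i, hi⟩

lemma Matrix.sum_eq_zero_of_mulVec_eq_smul {K ι : Type*} [Field K] [Fintype ι]
    {A : Matrix ι ι K} (hA : 1 ᵥ* A = 0) {μ : K} (hμ : μ ≠ 0) {x : ι → K}
    (hx : A *ᵥ x = μ • x) : ∑ i, x i = 0 := by
  have h := dotProduct_mulVec 1 A x
  rw [hA, hx, zero_dotProduct, dotProduct_smul, smul_eq_mul] at h
  simpa [hμ, dotProduct] using h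

lemma Matrix.submatrix_mulVec_comp {R ι κ : Type*} [CommSemiring R] [Fintype ι] [Fintype κ]
    (A : Matrix κ κ R) {f : ι → κ} (hf : Function.Injective f) {x : κ → R}
    (hx : ∀ k ∉ Set.range f, x k = 0) :
    A.submatrix f f *ᵥ (x ∘ f) = (A *ᵥ x) ∘ f := by
  funext i
  exact Fintype.sum_of_injective f hf _ _ (fun k hk => by simp [hx k hk]) fun _ => rfl

lemma exists_ne_zero_submatrix_mulVec_eq_zero {ι κ : Type*} [Fintype ι] [Fintype κ]
    [DecidableEq κ] {A : Matrix κ κ ℝ} (hA : 1 ᵥ* A = 0) {μ : ℝ} (hμ : μ ≠ 0) {f : ι → κ}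
    (hf : Function.Injective f) (s : Finset ι) (hcard : Fintype.card κ < eigMult A μ + s.card) :
    ∃ y : ι → ℝ, (μ • 1 - A).submatrix f f *ᵥ y = 0 ∧ ∑ i, y i = 0 ∧ y ≠ 0 ∧
      ∀ i ∉ s, y i = 0 := by
  obtain ⟨x, hxE, hx0, hxs⟩ :=
    (Module.End.eigenspace A.mulVecLin μ).exists_ne_zero_forall_notMem_eq_zero
      (s.map ⟨f, hf⟩) (by simpa [eigMult] using hcard)
  have hx : A *ᵥ x = μ • x := Module.End.mem_eigenspace_iff.mp hxE
  have hoff : ∀ k ∉ Set.range f, x k = 0 := fun k hk =>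
    hxs k (by simpa using fun i _ h => hk ⟨i, h⟩)
  refine ⟨x ∘ f, ?_, ?_, ?_, fun i hi => hxs (f i) (by simpa using hi)⟩
  · rw [submatrix_mulVec_comp _ hf hoff, sub_mulVec, hx, smul_mulVec, one_mulVec, sub_self,
      Pi.zero_comp]
  · exact (Fintype.sum_of_injective f hf _ x hoff fun _ => rfl).trans
      (sum_eq_zero_of_mulVec_eq_smul hA hμ hx)
  · refine fun h => hx0 (funext fun k => ?_)
    obtain ⟨i, rfl⟩ | hk := em (k ∈ Set.range f)
    · exact congrFun h i
    · exact hoff k hk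

section DistLaplacian

variable {V : Type*} [Fintype V] [DecidableEq V] (G : SimpleGraph V)

lemma distLaplacian_apply (u v : V) :
    distLaplacian G u v = (if u = v then (transmission G u : ℝ) else 0) - G.dist u v := by
  by_cases h : u = v <;> simp [distLaplacian, transmission, h]

lemma distLaplacian_isHermitian : (distLaplacian G).IsHermitian := by
  ext u v
  obtain rfl | h := eq_or_ne u v
  · rfl
  · simp [distLaplacian_apply, h, h.symm, SimpleGraph.dist_comm]

lemma one_vecMul_distLaplacian : 1 ᵥ* distLaplacian G = 0 := by
  funext v
  simp [vecMul, dotProduct, distLaplacian_apply, transmission, SimpleGraph.dist_comm]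

lemma lambdaMax_distLaplacian_pos {u v : V} (h : G.Adj u v) :
    0 < lambdaMax (distLaplacian G) := by
  have hdiag := (distLaplacian_isHermitian G).posSemidef_lambdaMax_smul_one_sub.diag_nonneg (i := u)
  simp only [Matrix.sub_apply, Matrix.smul_apply, one_apply_eq, smul_eq_mul, mul_one,
    distLaplacian_apply, ↓reduceIte, SimpleGraph.dist_self, CharP.cast_eq_zero, sub_zero,
    sub_nonneg] at hdiag
  have htr : 0 < transmission G u :=
    calc 0 < G.dist u v := by rw [SimpleGraph.dist_eq_one_iff_adj.mpr h]; exact one_pos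
      _ ≤ transmission G u := Finset.single_le_sum (fun _ _ => Nat.zero_le _) (Finset.mem_univ v)
  exact (Nat.cast_pos.mpr htr).trans_le hdiag

end DistLaplacian

section InducedPath

open SimpleGraph

variable {V : Type*} {G : SimpleGraph V} {n : ℕ} (f : pathGraph n ↪g G)

lemma reachable_of_pathGraph_embedding (i j : Fin n) : G.Reachable (f i) (f j) :=
  (pathGraph_preconnected n i j).map f.toHom

lemma dist_eq_one_of_pathGraph_embedding {i j : Fin n} (h : i.val + 1 = j.val) :
    G.dist (f i) (f j) = 1 :=
  dist_eq_one_iff_adj.mpr (f.map_adj_iff.mpr (pathGraph_adj.mpr (Or.inl h)))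

lemma two_le_dist_of_pathGraph_embedding {i j : Fin n} (h : i.val + 1 < j.val) :
    2 ≤ G.dist (f i) (f j) :=
  (reachable_of_pathGraph_embedding f i j).one_lt_dist_of_ne_of_not_adj
    (f.injective.ne (Fin.ne_of_val_ne (by omega)))
    (by rw [f.map_adj_iff, pathGraph_adj]; omega)

lemma dist_eq_two_of_pathGraph_embedding {i j : Fin n} (h : i.val + 2 = j.val) :
    G.dist (f i) (f j) = 2 := by
  let k : Fin n := ⟨i.val + 1, by omega⟩
  refine le_antisymm ?_ (two_le_dist_of_pathGraph_embedding f (by omega))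
  calc G.dist (f i) (f j) ≤ G.dist (f i) (f k) + G.dist (f k) (f j) :=
        (reachable_of_pathGraph_embedding f i k).dist_triangle_left _
    _ = 2 := by
        rw [dist_eq_one_of_pathGraph_embedding f rfl,
          dist_eq_one_of_pathGraph_embedding f (by simp [k]; omega)]

end InducedPath

/-- `λ I - D^L` restricted to an induced path `v₀ ⋯ v₄`, with `c i = λ - Tr(vᵢ)`,
`p = d(v₀, v₃)`, `q = d(v₁, v₄)` and `r = d(v₀, v₄)`. -/
def inducedP5Block (c : Fin 5 → ℝ) (p q r : ℝ) : Matrix (Fin 5) (Fin 5) ℝ :=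
  !![c 0, 1, 2, p, r;
     1, c 1, 1, 2, q;
     2, 1, c 2, 1, 2;
     p, 2, 1, c 3, 1;
     r, q, 2, 1, c 4]

section InducedP5Block

variable {c : Fin 5 → ℝ} {p q r : ℝ}

lemma inducedP5Block_mulVec_eq_zero {y : Fin 5 → ℝ} :
    inducedP5Block c p q r *ᵥ y = 0 ↔
      c 0 * y 0 + y 1 + 2 * y 2 + p * y 3 + r * y 4 = 0 ∧
      y 0 + c 1 * y 1 + y 2 + 2 * y 3 + q * y 4 = 0 ∧
      2 * y 0 + y 1 + c 2 * y 2 + y 3 + 2 * y 4 = 0 ∧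
      p * y 0 + 2 * y 1 + y 2 + c 3 * y 3 + y 4 = 0 ∧
      r * y 0 + q * y 1 + 2 * y 2 + y 3 + c 4 * y 4 = 0 := by
  simp [funext_iff, Fin.forall_fin_succ, inducedP5Block, dotProduct, Fin.sum_univ_five]

lemma inducedP5Block_det_relation {z : Fin 5 → ℝ} (hz : inducedP5Block c p q r *ᵥ z = 0)
    (hsum : ∑ i, z i = 0) (h4 : z 4 = 0) (hne : z ≠ 0) :
    (c 0 + (p - 2) * (r - 2) - 2) * (c 1 + q - 3) = ((p - 2) * (q - 2) - 1) * (r - 2) := by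
  obtain ⟨h0, h1, -, -, h4'⟩ := inducedP5Block_mulVec_eq_zero.mp hz
  simp only [Fin.sum_univ_five, h4, mul_zero, add_zero] at hsum h0 h1 h4'
  -- eliminating `z 2` and `z 3` leaves a 2 × 2 system in `(z 0, z 1)`
  have e0 : (c 0 + (p - 2) * (r - 2) - 2) * z 0 + ((p - 2) * (q - 2) - 1) * z 1 = 0 := by
    linear_combination h0 + (p - 2) * h4' + (2 - 2 * p) * hsum
  have e1 : (r - 2) * z 0 + (c 1 + q - 3) * z 1 = 0 := by
    linear_combination h1 + h4' - 3 * hsum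
  by_contra hdet
  replace hdet := sub_ne_zero.mpr hdet
  have hz0 : z 0 = 0 := by
    refine (mul_eq_zero.mp ?_).resolve_left hdet
    linear_combination (c 1 + q - 3) * e0 - ((p - 2) * (q - 2) - 1) * e1
  have hz1 : z 1 = 0 := by
    refine (mul_eq_zero.mp ?_).resolve_left hdet
    linear_combination (c 0 + (p - 2) * (r - 2) - 2) * e1 - (r - 2) * e0
  have hz2 : z 2 = 0 := by
    linear_combination h4' - hsum - (r - 1) * hz0 - (q - 1) * hz1
  have hz3 : z 3 = 0 := by linear_combination hsum - hz0 - hz1 - hz2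
  exact hne (funext fun i => by fin_cases i <;> assumption)

lemma inducedP5Block_kernel_antisymm {y : Fin 5 → ℝ} (hy : inducedP5Block c p q r *ᵥ y = 0)
    (hsum : ∑ i, y i = 0) (h2 : y 2 = 0) : y 3 = -y 1 ∧ y 4 = -y 0 := by
  obtain ⟨-, -, h2', -, -⟩ := inducedP5Block_mulVec_eq_zero.mp hy
  simp only [Fin.sum_univ_five, h2, mul_zero, add_zero] at hsum h2'
  constructor
  · linear_combination 2 * hsum - h2'
  · linear_combination h2' - hsum

lemma mul_neg_of_det_relation {c₀ c₁ s w : ℝ} (hp : 2 ≤ p) (hp' : p ≤ 3) (hq : 2 ≤ q)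
    (hq' : q ≤ 3) (hr : 2 ≤ r) (hne : s ≠ 0 ∨ w ≠ 0)
    (h₀ : c₀ * s = r * s + (p - 1) * w) (h₁ : c₁ * w = 2 * w + (q - 1) * s)
    (hdet : (c₀ + (p - 2) * (r - 2) - 2) * (c₁ + q - 3) = ((p - 2) * (q - 2) - 1) * (r - 2)) :
    s * w < 0 := by
  have hs : s ≠ 0 := by
    rintro rfl
    have hw : (p - 1) * w = 0 := by linear_combination -h₀
    exact hne.resolve_left (fun h => h rfl) ((mul_eq_zero.mp hw).resolve_left (by linarith))
  have hw : w ≠ 0 := by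
    rintro rfl
    have : (q - 1) * s = 0 := by linear_combination -h₁
    exact hs ((mul_eq_zero.mp this).resolve_left (by linarith))
  -- `hdet` times `s * w`, with `(c₀ + ⋯) * s` and `(c₁ + ⋯) * w` factored through `h₀`, `h₁`
  have key : (p - 1) * (q - 1) * (((r - 2) * s + w) * (s + w))
      = ((p - 2) * (q - 2) - 1) * (r - 2) * (s * w) := by
    linear_combination (s * w) * hdet - (p - 1) * ((r - 2) * s + w) * h₁ - (c₁ + q - 3) * w * h₀
  by_contra! hsw
  replace hsw : 0 < s * w := lt_of_le_of_ne hsw (mul_ne_zero hs hw).symm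
  have hlhs : 0 < (p - 1) * (q - 1) * (((r - 2) * s + w) * (s + w)) := by
    refine mul_pos (mul_pos (by linarith) (by linarith)) ?_
    have h := mul_nonneg (sub_nonneg.mpr hr) (sq_nonneg s)
    have h' := mul_pos (by linarith : (0 : ℝ) < r - 1) hsw
    linarith [sq_pos_of_ne_zero hw]
  have hrhs : ((p - 2) * (q - 2) - 1) * (r - 2) * (s * w) ≤ 0 := by
    have : (p - 2) * (q - 2) ≤ 1 := mul_le_one₀ (by linarith) (by linarith) (by linarith)
    exact mul_nonpos_of_nonpos_of_nonneg
      (mul_nonpos_of_nonpos_of_nonneg (by linarith) (by linarith)) hsw.le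
  linarith

theorem not_posSemidef_inducedP5Block (hp : 2 ≤ p) (hp' : p ≤ 3) (hq : 2 ≤ q) (hq' : q ≤ 3)
    (hr : 2 ≤ r) (hr' : r ≤ p + 1) {y z : Fin 5 → ℝ}
    (hy : inducedP5Block c p q r *ᵥ y = 0) (hy_sum : ∑ i, y i = 0) (hy2 : y 2 = 0)
    (hy_ne : y ≠ 0) (hz : inducedP5Block c p q r *ᵥ z = 0) (hz_sum : ∑ i, z i = 0)
    (hz4 : z 4 = 0) (hz_ne : z ≠ 0) :
    ¬ (inducedP5Block c p q r).PosSemidef := by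
  intro hN
  obtain ⟨hy3, hy4⟩ := inducedP5Block_kernel_antisymm hy hy_sum hy2
  obtain ⟨h0, h1, -, h3, -⟩ := inducedP5Block_mulVec_eq_zero.mp hy
  have e₀ : c 0 * y 0 = r * y 0 + (p - 1) * y 1 := by
    linear_combination h0 - 2 * hy2 - p * hy3 - r * hy4
  have e₁ : c 1 * y 1 = 2 * y 1 + (q - 1) * y 0 := by
    linear_combination h1 - hy2 - 2 * hy3 - q * hy4
  have e₃ : c 3 * y 1 = 2 * y 1 + (p - 1) * y 0 := by
    linear_combination -h3 + hy2 + c 3 * hy3 + hy4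
  have hsw : y 0 * y 1 < 0 := by
    refine mul_neg_of_det_relation hp hp' hq hq' hr ?_ e₀ e₁
      (inducedP5Block_det_relation hz hz_sum hz4 hz_ne)
    by_contra! h
    exact hy_ne (funext fun i => by fin_cases i <;> simp [h.1, h.2, hy2, hy3, hy4])
  have hc : p * p ≤ c 0 * c 3 := by simpa [inducedP5Block] using hN.apply_mul_apply_le 0 3
  have hprod : c 0 * c 3 * (y 0 * y 1) = (r * y 0 + (p - 1) * y 1) * (2 * y 1 + (p - 1) * y 0) := by
    linear_combination (c 3 * y 1) * e₀ + (r * y 0 + (p - 1) * y 1) * e₃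
  -- `c 0 * c 3 ≥ p²` and `s w < 0` give `r(p-1)s² + 2(p-1)w² + (2r-2p+1)sw ≤ 0` for
  -- `s = y 0`, `w = y 1`, but this form is positive definite when `2 ≤ p` and `2 ≤ r ≤ p + 1`
  have hrp : 0 ≤ r * (p - 1) - 2 := by nlinarith
  linarith [mul_le_mul_of_nonpos_right hc hsw.le, sq_nonneg (4 * y 0 + 3 * y 1),
    sq_pos_of_ne_zero (right_ne_zero_of_mul hsw.ne), mul_nonneg hrp (sq_nonneg (y 0)),
    mul_nonneg (by linarith : 0 ≤ p - 2) (sq_nonneg (y 1)),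
    mul_nonneg (by linarith : 0 ≤ 3 - (2 * r - 2 * p + 1)) (neg_nonneg.mpr hsw.le)]

end InducedP5Block

section InducedP5

open SimpleGraph

variable {V : Type*} {G : SimpleGraph V} (f : pathGraph 5 ↪g G)

lemma dist_bounds_of_pathGraph_five_embedding :
    (2 : ℝ) ≤ G.dist (f 0) (f 3) ∧ (G.dist (f 0) (f 3) : ℝ) ≤ 3 ∧
    (2 : ℝ) ≤ G.dist (f 1) (f 4) ∧ (G.dist (f 1) (f 4) : ℝ) ≤ 3 ∧
    (2 : ℝ) ≤ G.dist (f 0) (f 4) ∧ (G.dist (f 0) (f 4) : ℝ) ≤ G.dist (f 0) (f 3) + 1 := by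
  have h03 := (reachable_of_pathGraph_embedding f 0 2).dist_triangle_left (f 3)
  have h14 := (reachable_of_pathGraph_embedding f 1 3).dist_triangle_left (f 4)
  have h04 := (reachable_of_pathGraph_embedding f 0 3).dist_triangle_left (f 4)
  rw [dist_eq_two_of_pathGraph_embedding f (i := 0) (j := 2) rfl,
    dist_eq_one_of_pathGraph_embedding f (i := 2) (j := 3) rfl] at h03
  rw [dist_eq_two_of_pathGraph_embedding f (i := 1) (j := 3) rfl,
    dist_eq_one_of_pathGraph_embedding f (i := 3) (j := 4) rfl] at h14
  rw [dist_eq_one_of_pathGraph_embedding f (i := 3) (j := 4) rfl] at h04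
  have l03 := two_le_dist_of_pathGraph_embedding f (i := 0) (j := 3) (by decide)
  have l14 := two_le_dist_of_pathGraph_embedding f (i := 1) (j := 4) (by decide)
  have l04 := two_le_dist_of_pathGraph_embedding f (i := 0) (j := 4) (by decide)
  refine ⟨?_, ?_, ?_, ?_, ?_, ?_⟩ <;> norm_cast

variable [Fintype V] [DecidableEq V]

lemma smul_one_sub_distLaplacian_submatrix (μ : ℝ) :
    (μ • 1 - distLaplacian G).submatrix f f =
      inducedP5Block (fun i => μ - transmission G (f i))
        (G.dist (f 0) (f 3)) (G.dist (f 1) (f 4)) (G.dist (f 0) (f 4)) := by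
  have h01 := dist_eq_one_of_pathGraph_embedding f (i := 0) (j := 1) rfl
  have h12 := dist_eq_one_of_pathGraph_embedding f (i := 1) (j := 2) rfl
  have h23 := dist_eq_one_of_pathGraph_embedding f (i := 2) (j := 3) rfl
  have h34 := dist_eq_one_of_pathGraph_embedding f (i := 3) (j := 4) rfl
  have h02 := dist_eq_two_of_pathGraph_embedding f (i := 0) (j := 2) rfl
  have h13 := dist_eq_two_of_pathGraph_embedding f (i := 1) (j := 3) rfl
  have h24 := dist_eq_two_of_pathGraph_embedding f (i := 2) (j := 4) rfl
  ext i j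
  fin_cases i <;> fin_cases j <;>
    simp [inducedP5Block, distLaplacian_apply, f.injective.eq_iff, h01, h12, h23, h34, h02, h13,
      h24, dist_comm.trans h01, dist_comm.trans h12, dist_comm.trans h23, dist_comm.trans h34,
      dist_comm.trans h02, dist_comm.trans h13, dist_comm.trans h24,
      dist_comm (u := f 3) (v := f 0), dist_comm (u := f 4) (v := f 1),
      dist_comm (u := f 4) (v := f 0)]

end InducedP5

theorem no_induced_P5_of_multiplicity_eq_sub_three_general
    (n : ℕ) (G : SimpleGraph (Fin n))
    (hmult : eigMult (distLaplacian G) (lambdaMax (distLaplacian G)) = n - 3) :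
    IsEmpty (SimpleGraph.pathGraph 5 ↪g G) := by
  refine ⟨fun f => ?_⟩
  have hmax : lambdaMax (distLaplacian G) ≠ 0 :=
    (lambdaMax_distLaplacian_pos G (SimpleGraph.dist_eq_one_iff_adj.mp
      (dist_eq_one_of_pathGraph_embedding f (i := 0) (j := 1) rfl))).ne'
  have hcard :
      Fintype.card (Fin n) < eigMult (distLaplacian G) (lambdaMax (distLaplacian G)) + 4 := by
    have := Fintype.card_le_of_embedding f.toEmbedding
    simp only [Fintype.card_fin] at this ⊢
    omega
  obtain ⟨y, hy, hy_sum, hy_ne, hy_supp⟩ := exists_ne_zero_submatrix_mulVec_eq_zero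
    (one_vecMul_distLaplacian G) hmax f.injective {0, 1, 3, 4} hcard
  obtain ⟨z, hz, hz_sum, hz_ne, hz_supp⟩ := exists_ne_zero_submatrix_mulVec_eq_zero
    (one_vecMul_distLaplacian G) hmax f.injective {0, 1, 2, 3} hcard
  have hpsd := (distLaplacian_isHermitian G).posSemidef_lambdaMax_smul_one_sub.submatrix f
  rw [smul_one_sub_distLaplacian_submatrix] at hy hz hpsd
  obtain ⟨hp, hp', hq, hq', hr, hr'⟩ := dist_bounds_of_pathGraph_five_embedding f
  exact not_posSemidef_inducedP5Block hp hp' hq hq' hr hr' hy hy_sum (hy_supp 2 (by decide)) hy_ne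
    hz hz_sum (hz_supp 4 (by decide)) hz_ne hpsd

/-- If `G` is a connected graph on `n ≥ 5` vertices whose largest distance
Laplacian eigenvalue has multiplicity `n - 3`, then `G` contains no induced `P₅`. -/
theorem no_induced_P5_of_multiplicity_eq_sub_three
    (n : ℕ) (hn : 5 ≤ n) (G : SimpleGraph (Fin n)) (hG : G.Connected)
    (hmult : eigMult (distLaplacian G) (lambdaMax (distLaplacian G)) = n - 3) :
    IsEmpty (SimpleGraph.pathGraph 5 ↪g G) :=
  no_induced_P5_of_multiplicity_eq_sub_three_general n G hmult
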